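/- Under Lim's system hypotheses (see context), the following strict upper bound holds: Σ_{k ∈ ZMod(2n)} 1/(1 + exp(h·ℓ'_k)) < sinh(h·Λ/2). (Since ℓ' is constant on the pairs {k, ω(k)}, this sum equals twice the sum of 1/(1+exp(h·ℓ_i)) over the n pairs, so this is the upper bound in the Basmajian-type inequality for metric graphs, Theorem 2 of the paper.) -/

import Mathlib

/-!
Write `a = exp (-h L)`, `c = exp (-h ℓ') Y` and `q = ∏ a = exp (-h Λ)`. Unrolling the recurrences
for `X` and `X̄` once around the cycle gives, with `p = ω k`,
`(1 - q) Y k = ∑_{m ≠ p} (F m + G m) c m + 2 q c p`, where `F m` and `G m` are the products of `a`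
over the two arcs joining `p` to `m`; hence `F m G m = q` and AM–GM yields
`(1 - q) Y k ≥ 2 √q (∑ c - c p) + 2 q c p`. Adding this for `k` and `ω k` and using
`ℓ' ∘ ω = ℓ'` bounds `Y k + Y (ω k)` below by `4 √q ∑ c / ((1 - q) + 2 (√q - q) b k)`,
where `b = exp (-h ℓ')`.
Multiplying by `b k` and summing gives `∑ b k / ((1 - q) + 2 (√q - q) b k) ≤ 1 / (2 √q)`, and since
`2 √q < 1 + q` each `b k / (1 + b k) = 1 / (1 + exp (h ℓ' k))` is strictly below `1 - q` times the
corresponding term. Finally `(1 - q) / (2 √q) = sinh (h Λ / 2)`.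
-/

open Finset

@[to_additive]
theorem prod_range_add_natCast {M : Type*} [CommMonoid M] (N : ℕ) [NeZero N] (f : ZMod N → M)
    (c : ZMod N) : ∏ i ∈ range N, f (c + i) = ∏ m, f m := by
  refine prod_nbij' (fun i => c + i) (fun m => (m - c).val) (by simp) (by simp [ZMod.val_lt])
    (fun i hi => ?_) (by simp) (fun _ _ => rfl)
  simpa using ZMod.val_cast_of_lt (mem_range.1 hi)

section Unroll

variable {R : Type*} [CommSemiring R] (u γ x : ℕ → R)

theorem unroll_forward (hx : ∀ i, x i = u (i + 1) * x (i + 1) + γ i) (n : ℕ) :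
    u 0 * x 0 = (∏ j ∈ range (n + 1), u j) * x n
      + ∑ i ∈ range n, (∏ j ∈ range (i + 1), u j) * γ i := by
  induction n with
  | zero => simp
  | succ n ih => rw [ih, hx n, prod_range_succ _ (n + 1), sum_range_succ]; ring

theorem unroll_backward (hx : ∀ i, x (i + 1) = u i * x i + γ i) (n : ℕ) :
    x n = (∏ j ∈ range n, u j) * x 0
      + ∑ i ∈ range n, (∏ j ∈ Ico (i + 1) n, u j) * γ i := by
  induction n with
  | zero => simp
  | succ n ih =>
    have hsum : ∑ i ∈ range n, (∏ j ∈ Ico (i + 1) (n + 1), u j) * γ i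
        = u n * ∑ i ∈ range n, (∏ j ∈ Ico (i + 1) n, u j) * γ i := by
      rw [mul_sum]
      exact sum_congr rfl fun i hi => by rw [prod_Ico_succ_top (mem_range.1 hi)]; ring
    rw [hx n, ih, prod_range_succ, sum_range_succ, hsum, Ico_self, prod_empty]
    ring

end Unroll

theorem two_sqrt_prod_mul_sum_range_le (M : ℕ) (u γ x xb : ℕ → ℝ)
    (hu : ∀ i, 0 ≤ u i) (hγ : ∀ i, 0 ≤ γ i)
    (hx : ∀ i, x i = u (i + 1) * x (i + 1) + γ i) (hxb : ∀ i, xb (i + 1) = u i * xb i + γ i)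
    (hu_per : u (M + 1) = u 0) (hx_per : x (M + 1) = x 0) (hxb_per : xb (M + 1) = xb 0) :
    2 * √(∏ i ∈ range (M + 1), u i) * ∑ i ∈ range M, γ i + 2 * (∏ i ∈ range (M + 1), u i) * γ M
      ≤ (1 - ∏ i ∈ range (M + 1), u i) * (u 0 * x 0 + xb 0 - γ M) := by
  have hforward := unroll_forward u γ x hx (M + 1)
  have hbackward := unroll_backward u γ xb hxb (M + 1)
  rw [prod_range_succ _ (M + 1), hu_per, hx_per, sum_range_succ] at hforward
  rw [hxb_per, sum_range_succ, Ico_self, prod_empty] at hbackward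
  set q := ∏ i ∈ range (M + 1), u i
  -- the weights of `γ i` coming from `x` and from `xb`: products of `u` over `[0, i]`, `[i + 1, M]`
  set F : ℕ → ℝ := fun i => ∏ j ∈ range (i + 1), u j
  set G : ℕ → ℝ := fun i => ∏ j ∈ Ico (i + 1) (M + 1), u j
  have hsplit : (1 - q) * (u 0 * x 0 + xb 0 - γ M)
      = ∑ i ∈ range M, (F i + G i) * γ i + 2 * q * γ M := by
    simp only [add_mul, sum_add_distrib]
    linear_combination hforward + hbackward
  have hamgm : ∀ i ∈ range M, 2 * √q * γ i ≤ (F i + G i) * γ i := by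
    intro i hi
    have hFG : F i * G i = q := prod_range_mul_prod_Ico u (by simpa using (mem_range.1 hi).le)
    have hF : 0 ≤ F i := prod_nonneg fun j _ => hu j
    have hG : 0 ≤ G i := prod_nonneg fun j _ => hu j
    refine mul_le_mul_of_nonneg_right ?_ (hγ i)
    rw [← hFG]
    nlinarith [sq_nonneg (F i - G i), Real.sq_sqrt (mul_nonneg hF hG),
      Real.sqrt_nonneg (F i * G i)]
  rw [hsplit, mul_sum]
  exact add_le_add_left (sum_le_sum hamgm) _

theorem two_sqrt_prod_mul_sum_le {N : ℕ} [NeZero N] (a c X Xb : ZMod N → ℝ)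
    (ha : ∀ m, 0 ≤ a m) (hc : ∀ m, 0 ≤ c m)
    (hX : ∀ m, X m = a (m + 1) * X (m + 1) + c m) (hXb : ∀ m, Xb (m + 1) = a m * Xb m + c m)
    (p : ZMod N) :
    2 * √(∏ m, a m) * (∑ m, c m - c p) + 2 * (∏ m, a m) * c p
      ≤ (1 - ∏ m, a m) * (a (p + 1) * X (p + 1) + a p * Xb p) := by
  obtain ⟨M, rfl⟩ : ∃ M, N = M + 1 := Nat.exists_eq_succ_of_ne_zero (NeZero.ne N)
  -- index `i` stands for the position `p + 1 + i`, so that `p` itself is the last index `M`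
  set e : ℕ → ZMod (M + 1) := fun i => p + 1 + i
  have he_succ : ∀ i, e (i + 1) = e i + 1 := fun i => by simp only [e]; push_cast; ring
  have he_zero : e 0 = p + 1 := by simp [e]
  have he_per : e (M + 1) = e 0 := by simp [e]
  have he_last : e M = p := by
    have : ((M + 1 : ℕ) : ZMod (M + 1)) = 0 := ZMod.natCast_self _
    simp only [e]; push_cast at this; linear_combination this
  have hprod : ∏ i ∈ range (M + 1), a (e i) = ∏ m, a m := prod_range_add_natCast _ a _
  have hsum : ∑ i ∈ range M, c (e i) = ∑ m, c m - c p := by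
    rw [← sum_range_add_natCast _ c (p + 1), sum_range_succ]
    change _ = _ + c (e M) - c p
    rw [he_last]; ring
  have key := two_sqrt_prod_mul_sum_range_le M (a ∘ e) (c ∘ e) (X ∘ e) (Xb ∘ e)
    (fun _ => ha _) (fun _ => hc _)
    (fun i => by simpa only [Function.comp, he_succ] using hX (e i))
    (fun i => by simpa only [Function.comp, he_succ] using hXb (e i))
    (congrArg a he_per) (congrArg X he_per) (congrArg Xb he_per)
  simp only [Function.comp, hprod, hsum, he_zero, he_last] at key
  rwa [hXb p, add_sub_assoc, add_sub_cancel_right] at key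

theorem sum_div_one_add_lt_of_pair_bounds {ι : Type*} [Fintype ι] [Nonempty ι] (ω : ι → ι)
    (hω : Function.Involutive ω) (b Y : ι → ℝ) (hb : ∀ k, 0 < b k) (hbω : ∀ k, b (ω k) = b k)
    (hY : ∀ k, 0 < Y k) {s : ℝ} (hs0 : 0 < s) (hs1 : s < 1)
    (hkey : ∀ k, 2 * s * (∑ m, b m * Y m - b (ω k) * Y (ω k)) + 2 * s ^ 2 * (b (ω k) * Y (ω k))
      ≤ (1 - s ^ 2) * Y k) :
    ∑ k, b k / (1 + b k) < (1 - s ^ 2) / (2 * s) := by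
  set T := ∑ m, b m * Y m
  set den : ι → ℝ := fun k => 1 - s ^ 2 + 2 * (s - s ^ 2) * b k
  have hs2 : s ^ 2 < s := by nlinarith
  have hden : ∀ k, 0 < den k := fun k => by have := hb k; simp only [den]; nlinarith
  have hT : 0 < T := sum_pos (fun m _ => mul_pos (hb m) (hY m)) univ_nonempty
  have hpair : ∀ k, 4 * s * T ≤ (Y k + Y (ω k)) * den k := by
    intro k
    have h₁ := hkey k
    have h₂ := hkey (ω k)
    rw [hbω] at h₁
    rw [hω k] at h₂
    simp only [den]
    linarith
  have hsum_pair : ∑ k, b k * (Y k + Y (ω k)) = 2 * T := by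
    have hswap : ∑ k, b k * Y (ω k) = T :=
      calc ∑ k, b k * Y (ω k) = ∑ k, b (ω k) * Y (ω k) := by simp only [hbω]
        _ = T := Equiv.sum_comp (hω.toPerm ω) fun m => b m * Y m
    simp only [mul_add, sum_add_distrib, hswap]
    ring
  have hsum_le : 2 * s * ∑ k, b k / den k ≤ 1 := by
    have hterm : ∀ k ∈ univ, 4 * s * T * (b k / den k) ≤ b k * (Y k + Y (ω k)) := by
      intro k _
      rw [mul_div_assoc', div_le_iff₀ (hden k)]
      nlinarith [hpair k, hb k]
    have := sum_le_sum hterm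
    rw [← mul_sum, hsum_pair] at this
    nlinarith
  have hlt : ∀ k ∈ univ, b k / (1 + b k) < (1 - s ^ 2) * (b k / den k) := by
    intro k _
    have := hb k
    rw [mul_div_assoc', div_lt_div_iff₀ (by linarith) (hden k)]
    simp only [den]
    nlinarith [mul_pos (mul_pos this this) (pow_pos (sub_pos.2 hs1) 2)]
  calc ∑ k, b k / (1 + b k) < ∑ k, (1 - s ^ 2) * (b k / den k) :=
        sum_lt_sum_of_nonempty univ_nonempty hlt
    _ = (1 - s ^ 2) * ∑ k, b k / den k := (mul_sum ..).symm
    _ ≤ (1 - s ^ 2) / (2 * s) := by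
        rw [le_div_iff₀ (by positivity)]
        nlinarith

theorem sum_lt_sinh_of_lim_system_general
    (n : ℕ) [NeZero n] (h : ℝ) (hh : 0 < h)
    (L ℓ' X Xb Y : ZMod (2 * n) → ℝ)
    (ω : ZMod (2 * n) → ZMod (2 * n))
    (hL : ∀ k, 0 < L k)
    (hω : ∀ k, ω (ω k) = k)
    (hℓω : ∀ k, ℓ' (ω k) = ℓ' k)
    (hY : ∀ k, 0 < Y k)
    (eqY : ∀ k, Y k = Real.exp (-h * L (ω k + 1)) * X (ω k + 1)
        + Real.exp (-h * L (ω k)) * Xb (ω k))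
    (eqX : ∀ k, X k = Real.exp (-h * L (k + 1)) * X (k + 1)
        + Real.exp (-h * ℓ' k) * Y k)
    (eqXb : ∀ k, Xb k = Real.exp (-h * L (k - 1)) * Xb (k - 1)
        + Real.exp (-h * ℓ' (k - 1)) * Y (k - 1)) :
    (∑ k, 1 / (1 + Real.exp (h * ℓ' k))) < Real.sinh (h * (∑ k, L k) / 2) := by
  set Λ := ∑ k, L k
  set s := Real.exp (-(h * Λ / 2))
  have hΛ : 0 < Λ := sum_pos (fun k _ => hL k) univ_nonempty
  have hs1 : s < 1 := Real.exp_lt_one_iff.2 (by simp only [neg_lt_zero]; positivity)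
  have hprod : ∏ m, Real.exp (-h * L m) = s ^ 2 := by
    rw [← Real.exp_sum, sq, ← Real.exp_add, ← mul_sum]; congr 1; ring
  have hkey : ∀ k, 2 * s * (∑ m, Real.exp (-h * ℓ' m) * Y m
        - Real.exp (-h * ℓ' (ω k)) * Y (ω k)) + 2 * s ^ 2 * (Real.exp (-h * ℓ' (ω k)) * Y (ω k))
      ≤ (1 - s ^ 2) * Y k := by
    intro k
    have := two_sqrt_prod_mul_sum_le (fun m => Real.exp (-h * L m))
      (fun m => Real.exp (-h * ℓ' m) * Y m) X Xb (fun _ => (Real.exp_pos _).le)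
      (fun m => (mul_pos (Real.exp_pos _) (hY m)).le) eqX
      (fun m => by simpa using eqXb (m + 1)) (ω k)
    rwa [hprod, Real.sqrt_sq (Real.exp_pos _).le, ← eqY] at this
  have hterm : ∀ k, 1 / (1 + Real.exp (h * ℓ' k))
      = Real.exp (-h * ℓ' k) / (1 + Real.exp (-h * ℓ' k)) := fun k => by
    rw [neg_mul, Real.exp_neg]; field_simp; ring
  have hsinh : Real.sinh (h * Λ / 2) = (1 - s ^ 2) / (2 * s) := by
    have hs : s = (Real.exp (h * Λ / 2))⁻¹ := Real.exp_neg _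
    rw [Real.sinh_eq, Real.exp_neg, hs]; field_simp
  rw [sum_congr rfl fun k _ => hterm k, hsinh]
  exact sum_div_one_add_lt_of_pair_bounds ω hω _ Y (fun _ => Real.exp_pos _)
    (fun k => by rw [hℓω]) hY (Real.exp_pos _) hs1 hkey

/-- Upper bound in the Basmajian-type inequality for metric graphs
(Theorem 2, upper bound), stated via Lim's system of equations. -/
theorem sum_lt_sinh_of_lim_system
    (n : ℕ) [NeZero n] (hn : 1 ≤ n) (h : ℝ) (hh : 0 < h)
    (L ℓ' X Xb Y : ZMod (2 * n) → ℝ)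
    (ω : ZMod (2 * n) → ZMod (2 * n))
    (hL : ∀ k, 0 < L k)
    (hω : ∀ k, ω (ω k) = k) (hω' : ∀ k, ω k ≠ k)
    (hℓpos : ∀ k, 0 < ℓ' k) (hℓω : ∀ k, ℓ' (ω k) = ℓ' k)
    (hX : ∀ k, 0 < X k) (hXb : ∀ k, 0 < Xb k) (hY : ∀ k, 0 < Y k)
    (eqY : ∀ k, Y k = Real.exp (-h * L (ω k + 1)) * X (ω k + 1)
        + Real.exp (-h * L (ω k)) * Xb (ω k))
    (eqX : ∀ k, X k = Real.exp (-h * L (k + 1)) * X (k + 1)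
        + Real.exp (-h * ℓ' k) * Y k)
    (eqXb : ∀ k, Xb k = Real.exp (-h * L (k - 1)) * Xb (k - 1)
        + Real.exp (-h * ℓ' (k - 1)) * Y (k - 1)) :
    (∑ k, 1 / (1 + Real.exp (h * ℓ' k))) < Real.sinh (h * (∑ k, L k) / 2) :=
  sum_lt_sinh_of_lim_system_general n h hh L ℓ' X Xb Y ω hL hω hℓω hY eqY eqX eqXb
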